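/- Let M be an n-dimensional Hadamard manifold, Ω ⊆ M a nonempty closed convex set, F : Ω × Ω → ℝ a monotone bifunction with F(x,x) = 0 for all x ∈ Ω, and λ > 0. Assume: for every x ∈ Ω, y ↦ F(x,y) is convex and lower semicontinuous; for every y ∈ Ω, x ↦ F(x,y) is upper semicontinuous; and for every z_0 ∈ M and every sequence {z^k} ⊂ Ω with d(z^k, z_0) → ∞ there exist x* ∈ Ω and k_0 ∈ ℕ with F(z^k, x*) ≤ 0 for all k ≥ k_0. Then for every x ∈ M the resolvent set J_λ^F(x) := {z ∈ Ω : λ F(z,y) + d(z,x) b_{γ_{z,x}}(y) ≥ 0 for all y ∈ Ω} is nonempty, where the regularization term d(z,x) b_{γ_{z,x}}(y) is understood to be 0 when z = x. -/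

import Mathlib

open Set Filter

universe u v

/-- An axiomatic model of an `n`-dimensional Hadamard manifold: a complete (proper) metric
space `M` (with `dist` the Riemannian distance) in which every pair of points `x, y` is joined
by a unique minimizing geodesic `geo x y : ℝ → M` (`geo x y t = exp_x (t • exp_x⁻¹ y)`),
satisfying the nonpositive-curvature comparison inequalities, in which every pair of distinct
points `z, x` determines a unique unit-speed geodesic ray `ray z x` starting at `z` and passing
through `x`, and in which, for each point `x`, the exponential map
`exp x : T_xM ≃ ℝⁿ → M` is a homeomorphism with inverse `log x` satisfying
`dist x y = ‖log x y‖`, jointly continuous in the footpoint (the tangent bundle `TM` with its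
Sasaki metric being globally trivialized as `M × ℝⁿ`). Euclidean space `ℝⁿ` is a model, so the
axioms are consistent. -/
class Hadamard (n : ℕ) (M : Type u) extends MetricSpace M where
  geo : M → M → ℝ → M
  geo_zero : ∀ x y : M, geo x y 0 = x
  geo_one : ∀ x y : M, geo x y 1 = y
  geo_dist : ∀ x y : M, ∀ s ∈ Set.Icc (0:ℝ) 1, ∀ t ∈ Set.Icc (0:ℝ) 1,
    dist (geo x y s) (geo x y t) = |s - t| * dist x y
  geo_unique : ∀ x y z : M, ∀ t ∈ Set.Icc (0:ℝ) 1,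
    dist x z = t * dist x y → dist z y = (1 - t) * dist x y → z = geo x y t
  dist_convex : ∀ x y x' y' : M, ∀ t ∈ Set.Icc (0:ℝ) 1,
    dist (geo x y t) (geo x' y' t) ≤ (1 - t) * dist x x' + t * dist y y'
  cn_ineq : ∀ x y p : M, ∀ t ∈ Set.Icc (0:ℝ) 1,
    dist (geo x y t) p ^ 2 ≤
      (1 - t) * dist x p ^ 2 + t * dist y p ^ 2 - t * (1 - t) * dist x y ^ 2
  ray : M → M → ℝ → M
  ray_zero : ∀ z x : M, z ≠ x → ray z x 0 = z
  ray_through : ∀ z x : M, z ≠ x → ray z x (dist z x) = x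
  ray_isom : ∀ z x : M, z ≠ x → ∀ s ∈ Set.Ici (0:ℝ), ∀ t ∈ Set.Ici (0:ℝ),
    dist (ray z x s) (ray z x t) = |s - t|
  exp : M → EuclideanSpace ℝ (Fin n) → M
  log : M → M → EuclideanSpace ℝ (Fin n)
  exp_log : ∀ x y : M, exp x (log x y) = y
  log_exp : ∀ (x : M) (v : EuclideanSpace ℝ (Fin n)), log x (exp x v) = v
  dist_log : ∀ x y : M, dist x y = ‖log x y‖
  exp_continuous : Continuous fun p : M × EuclideanSpace ℝ (Fin n) => exp p.1 p.2
  geo_exp : ∀ (x y : M) (t : ℝ), geo x y t = exp x (t • log x y)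
  properSpace : ProperSpace M

/-- A set `D` in a Hadamard manifold is convex if for any `x, y ∈ D` the geodesic segment
`γ_{x,y}([0,1])` is contained in `D`. -/
def GConvex (n : ℕ) {M : Type u} [Hadamard n M] (D : Set M) : Prop :=
  ∀ x ∈ D, ∀ y ∈ D, ∀ t ∈ Set.Icc (0:ℝ) 1, Hadamard.geo n x y t ∈ D

/-- A function `f` is convex on a convex set `D` if
`f (γ_{x,y}(t)) ≤ (1 - t) * f x + t * f y` for all `x, y ∈ D`, `t ∈ [0,1]`. -/
def GConvexOn (n : ℕ) {M : Type u} [Hadamard n M] (D : Set M) (f : M → ℝ) : Prop :=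
  ∀ x ∈ D, ∀ y ∈ D, ∀ t ∈ Set.Icc (0:ℝ) 1,
    f (Hadamard.geo n x y t) ≤ (1 - t) * f x + t * f y

/-- The convex hull of `B`: the smallest convex subset of `M` containing `B`. -/
def ghull (n : ℕ) {M : Type u} [Hadamard n M] (B : Set M) : Set M :=
  ⋂₀ {C : Set M | GConvex n C ∧ B ⊆ C}

/-- The Busemann function of the geodesic ray starting at `z` and passing through `x`,
evaluated at `y`:  `b_{γ_{z,x}}(y) = lim_{t → ∞} (d (y, γ_{z,x}(t)) - t)`
(junk value if the limit does not exist, e.g. if `z = x`). -/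
noncomputable def busemann (n : ℕ) {M : Type u} [Hadamard n M] (z x y : M) : ℝ :=
  limUnder atTop fun t : ℝ => dist y (Hadamard.ray n z x t) - t

/-!
The resolvent `J_λ^F(x)` is the equilibrium set of `G(w, v) = λ F(w, v) + d(w, x) b_{γ_{w,x}}(v)`.
The Busemann function is the limit of the convex, `1`-Lipschitz functions `d(·, γ(T)) - T`, and the
CN-inequality along the ray gives `d(x,y)² - d(z,y)² - d(z,x)² ≤ 2 d(z,x) b_{γ_{z,x}}(y)`; so `G` is
monotone, and convex and lower semicontinuous in `v`, like `F`.

On each truncation `Ω ∩ B̄(x, r)`, which is compact and convex, `G` has a Minty point `z`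
(`G(w, z) ≤ 0` for all `w`), as in Ky Fan's inequality: finitely many constraints are handled by
a separating hyperplane in `ℝᵏ` and a geodesic barycenter, at which monotonicity makes the weighted
sum of the `G(wᵢ, ·)` nonpositive; compactness does the rest. A Minty point solves the resolvent
inequality: perturb along `γ_{z,y}` and use `F(w, w) = 0`, convexity, the CN-inequality and upper
semicontinuity. By coercivity the Minty points of the truncations stay bounded (at a far-away one,
`G(z, x*) < 0`), and any cluster point of them is a Minty point on all of `Ω`.
-/

open Topology Metric

namespace Hadamard

variable {n : ℕ} {M : Type u} [Hadamard n M]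

lemma geo_self (x : M) {t : ℝ} (ht : t ∈ Icc (0:ℝ) 1) : geo n x x t = x :=
  (geo_unique x x x t ht (by simp) (by simp)).symm

lemma dist_geo_left (x y : M) {t : ℝ} (ht : t ∈ Icc (0:ℝ) 1) :
    dist x (geo n x y t) = t * dist x y := by
  have h := geo_dist (n := n) x y 0 (left_mem_Icc.2 zero_le_one) t ht
  rwa [geo_zero, zero_sub, abs_neg, abs_of_nonneg ht.1] at h

lemma dist_geo_le (x y p : M) {t : ℝ} (ht : t ∈ Icc (0:ℝ) 1) :
    dist (geo n x y t) p ≤ (1 - t) * dist x p + t * dist y p := by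
  simpa only [geo_self p ht] using dist_convex (n := n) x y p p t ht

lemma continuous_geo (x y : M) : Continuous (geo n x y) := by
  simp only [funext (geo_exp (n := n) x y)]
  exact exp_continuous.comp (continuous_const.prodMk (continuous_id.smul continuous_const))

lemma dist_ray_left {z x : M} (hzx : z ≠ x) {T : ℝ} (hT : 0 ≤ T) : dist z (ray n z x T) = T := by
  have h := ray_isom (n := n) z x hzx 0 self_mem_Ici T hT
  rwa [ray_zero z x hzx, zero_sub, abs_neg, abs_of_nonneg hT] at h

lemma dist_ray_sub_antitoneOn {z x : M} (hzx : z ≠ x) (y : M) :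
    AntitoneOn (fun T => dist y (ray n z x T) - T) (Ici 0) := by
  intro S hS T hT hST
  have h := ray_isom (n := n) z x hzx S hS T hT
  rw [abs_sub_comm, abs_of_nonneg (sub_nonneg.2 hST)] at h
  linarith [dist_triangle y (ray n z x S) (ray n z x T)]

lemma neg_dist_le_dist_ray_sub {z x : M} (hzx : z ≠ x) (y : M) {T : ℝ} (hT : 0 ≤ T) :
    -dist z y ≤ dist y (ray n z x T) - T := by
  linarith [dist_triangle z y (ray n z x T), dist_ray_left (n := n) hzx hT]

/-- Freezing `T ↦ d(y, γ(T)) - T` at `T = 0` for negative `T` makes it antitone on all of `ℝ`. -/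
lemma tendsto_busemann {z x : M} (hzx : z ≠ x) (y : M) :
    Tendsto (fun T => dist y (ray n z x T) - T) atTop (𝓝 (busemann n z x y)) := by
  set f := fun T => dist y (ray n z x T) - T
  have hanti : Antitone (fun T => f (max T 0)) := fun S T hST =>
    dist_ray_sub_antitoneOn (n := n) hzx y (le_max_right S 0) (le_max_right T 0)
      (max_le_max_right 0 hST)
  have hbdd : BddBelow (range fun T => f (max T 0)) := ⟨-dist z y, by
    rintro _ ⟨T, rfl⟩
    exact neg_dist_le_dist_ray_sub (n := n) hzx y (le_max_right T 0)⟩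
  have hf : Tendsto f atTop (𝓝 (⨅ T, f (max T 0))) := (tendsto_atTop_ciInf hanti hbdd).congr'
    (by filter_upwards [eventually_ge_atTop 0] with T hT; rw [max_eq_left hT])
  rwa [busemann, hf.limUnder_eq]

lemma busemann_le_dist_sub_dist {z x : M} (hzx : z ≠ x) (y : M) :
    busemann n z x y ≤ dist y x - dist z x := by
  have h := le_of_tendsto (tendsto_busemann hzx y) <| by
    filter_upwards [eventually_ge_atTop (dist z x)] with T hT
    exact dist_ray_sub_antitoneOn (n := n) hzx y dist_nonneg (dist_nonneg.trans hT) hT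
  simpa only [ray_through (n := n) z x hzx] using h

lemma lipschitzWith_busemann {z x : M} (hzx : z ≠ x) : LipschitzWith 1 (busemann n z x) :=
  LipschitzWith.of_le_add fun y y' =>
    le_of_tendsto_of_tendsto' (tendsto_busemann hzx y)
      ((tendsto_busemann hzx y').add_const (dist y y')) fun T => by
        linarith [dist_triangle y y' (ray n z x T)]

lemma busemann_geo_le {z x : M} (hzx : z ≠ x) (a b : M) {t : ℝ} (ht : t ∈ Icc (0:ℝ) 1) :
    busemann n z x (geo n a b t) ≤ (1 - t) * busemann n z x a + t * busemann n z x b :=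
  le_of_tendsto_of_tendsto' (tendsto_busemann hzx _)
    (((tendsto_busemann hzx a).const_mul (1 - t)).add ((tendsto_busemann hzx b).const_mul t))
    fun T => by linarith [dist_geo_le (n := n) a b (ray n z x T) ht]

lemma eq_geo_ray {z x : M} (hzx : z ≠ x) {T : ℝ} (hT : dist z x ≤ T) :
    x = geo n z (ray n z x T) (dist z x / T) := by
  have hd := dist_pos.2 hzx
  have hT0 : 0 < T := hd.trans_le hT
  have hxT := ray_isom (n := n) z x hzx (dist z x) hd.le T hT0.le
  rw [ray_through z x hzx, abs_sub_comm, abs_of_nonneg (sub_nonneg.2 hT)] at hxT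
  refine geo_unique z _ x _ ⟨by positivity, (div_le_one hT0).2 hT⟩ ?_ ?_ <;>
    rw [dist_ray_left hzx hT0.le] <;> field_simp
  exact hxT

/-- `x = γ_{z, γ(T)}(d(z,x)/T)`: apply the CN-inequality to this point and let `T → ∞`. -/
lemma sq_dist_sub_le_busemann {z x : M} (hzx : z ≠ x) (y : M) :
    dist x y ^ 2 - dist z y ^ 2 - dist z x ^ 2 ≤ 2 * dist z x * busemann n z x y := by
  set d := dist z x
  set f := fun T => dist y (ray n z x T) - T
  have hd : 0 < d := dist_pos.2 hzx
  have hcn : ∀ T, d < T →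
      dist x y ^ 2 ≤ (1 - d / T) * dist z y ^ 2 + d / T * f T ^ 2 + 2 * d * f T + d ^ 2 := by
    intro T hT
    have hT0 : 0 < T := hd.trans hT
    have h := cn_ineq (n := n) z (ray n z x T) y (d / T) ⟨by positivity, (div_le_one hT0).2 hT.le⟩
    rw [← eq_geo_ray (n := n) hzx hT.le, dist_ray_left hzx hT0.le, dist_comm (ray n z x T) y,
      show dist y (ray n z x T) = f T + T by simp [f]] at h
    convert h using 1
    field_simp
    ring
  have hdiv : Tendsto (fun T : ℝ => d / T) atTop (𝓝 0) := tendsto_const_nhds.div_atTop tendsto_id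
  have hlim := ((((tendsto_const_nhds (x := (1:ℝ))).sub hdiv).mul_const (dist z y ^ 2)).add
    (hdiv.mul ((tendsto_busemann (n := n) hzx y).pow 2))).add
    ((tendsto_busemann (n := n) hzx y).const_mul (2 * d)) |>.add_const (d ^ 2)
  have := ge_of_tendsto hlim (by filter_upwards [eventually_gt_atTop d] using hcn)
  simp only [sub_zero, one_mul, zero_mul, add_zero] at this
  linarith

end Hadamard

section Convexity

variable {n : ℕ} {M : Type u} [Hadamard n M]

lemma GConvex.inter {C D : Set M} (hC : GConvex n C) (hD : GConvex n D) : GConvex n (C ∩ D) :=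
  fun a ha b hb t ht => ⟨hC a ha.1 b hb.1 t ht, hD a ha.2 b hb.2 t ht⟩

lemma gconvex_closedBall (x : M) (r : ℝ) : GConvex n (closedBall x r) := by
  intro a ha b hb t ht
  rw [mem_closedBall] at *
  calc dist (Hadamard.geo n a b t) x ≤ (1 - t) * dist a x + t * dist b x :=
        Hadamard.dist_geo_le a b x ht
    _ ≤ (1 - t) * r + t * r := by gcongr <;> linarith [ht.1, ht.2]
    _ = r := by ring

lemma GConvexOn.mono {C D : Set M} {f : M → ℝ} (hf : GConvexOn n D f) (hCD : C ⊆ D) :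
    GConvexOn n C f :=
  fun a ha b hb t ht => hf a (hCD ha) b (hCD hb) t ht

lemma GConvexOn.add {D : Set M} {f g : M → ℝ} (hf : GConvexOn n D f) (hg : GConvexOn n D g) :
    GConvexOn n D (fun y => f y + g y) := fun a ha b hb t ht => by
  linarith [hf a ha b hb t ht, hg a ha b hb t ht]

lemma GConvexOn.const_mul {D : Set M} {f : M → ℝ} (hf : GConvexOn n D f) {c : ℝ} (hc : 0 ≤ c) :
    GConvexOn n D (fun y => c * f y) := fun a ha b hb t ht => by
  nlinarith [mul_le_mul_of_nonneg_left (hf a ha b hb t ht) hc]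

end Convexity

section Busemann

open Hadamard

variable {n : ℕ} {M : Type u} [Hadamard n M]

lemma dist_mul_busemann_le (z x y : M) :
    dist z x * busemann n z x y ≤ dist z x * (dist y x - dist z x) := by
  rcases eq_or_ne z x with rfl | hzx
  · simp
  · exact mul_le_mul_of_nonneg_left (busemann_le_dist_sub_dist hzx y) dist_nonneg

lemma sq_dist_sub_le_dist_mul_busemann (z x y : M) :
    dist x y ^ 2 - dist z y ^ 2 - dist z x ^ 2 ≤ 2 * (dist z x * busemann n z x y) := by
  rcases eq_or_ne z x with rfl | hzx
  · simp
  · linarith [sq_dist_sub_le_busemann (n := n) hzx y]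

lemma continuous_dist_mul_busemann (z x : M) :
    Continuous fun y => dist z x * busemann n z x y := by
  rcases eq_or_ne z x with rfl | hzx
  · simpa using continuous_const
  · exact continuous_const.mul (lipschitzWith_busemann hzx).continuous

lemma gconvexOn_dist_mul_busemann (z x : M) (D : Set M) :
    GConvexOn n D fun y => dist z x * busemann n z x y := by
  rcases eq_or_ne z x with rfl | hzx
  · intro a _ b _ t _
    simp
  · intro a _ b _ t ht
    have h := busemann_geo_le (n := n) hzx a b ht
    nlinarith [mul_le_mul_of_nonneg_left h (dist_nonneg (x := z) (y := x))]

end Busemann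

noncomputable def resolventBifunction (n : ℕ) {M : Type u} [Hadamard n M] (F : M → M → ℝ)
    (lam : ℝ) (x w v : M) : ℝ :=
  lam * F w v + dist w x * busemann n w x v

section ResolventBifunction

variable {n : ℕ} {M : Type u} [Hadamard n M] {F : M → M → ℝ} {lam : ℝ} {x : M}

lemma resolventBifunction_add_swap_nonpos (hlam : 0 ≤ lam) {a b : M}
    (hF : F a b + F b a ≤ 0) :
    resolventBifunction n F lam x a b + resolventBifunction n F lam x b a ≤ 0 := by
  unfold resolventBifunction
  nlinarith [mul_nonpos_of_nonneg_of_nonpos hlam hF, dist_mul_busemann_le (n := n) a x b,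
    dist_mul_busemann_le (n := n) b x a, sq_nonneg (dist a x - dist b x)]

lemma GConvexOn.resolventBifunction (hlam : 0 ≤ lam) {D : Set M} {w : M}
    (hF : GConvexOn n D (F w)) : GConvexOn n D (resolventBifunction n F lam x w) :=
  (hF.const_mul hlam).add (gconvexOn_dist_mul_busemann w x D)

lemma LowerSemicontinuousOn.resolventBifunction (hlam : 0 ≤ lam) {D : Set M} {w : M}
    (hF : LowerSemicontinuousOn (F w) D) :
    LowerSemicontinuousOn (resolventBifunction n F lam x w) D :=
  ((continuous_const_mul lam).comp_lowerSemicontinuousOn hF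
    (monotone_mul_left_of_nonneg hlam)).add
    (continuous_dist_mul_busemann w x).continuousOn.lowerSemicontinuousOn

lemma resolventBifunction_neg {z y : M} (hlam : 0 ≤ lam) (hF : F z y ≤ 0)
    (hyz : dist y x < dist z x) : resolventBifunction n F lam x z y < 0 := by
  have hz : 0 < dist z x := dist_nonneg.trans_lt hyz
  unfold resolventBifunction
  nlinarith [mul_nonpos_of_nonneg_of_nonpos hlam hF, dist_mul_busemann_le (n := n) z x y]

end ResolventBifunction

lemma UpperSemicontinuousWithinAt.le_of_tendsto {α β : Type*} [TopologicalSpace α] {f : α → ℝ}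
    {s : Set α} {z : α} (hf : UpperSemicontinuousWithinAt f s z) {l : Filter β} [l.NeBot]
    {w : β → α} (hw : Tendsto w l (𝓝[s] z)) {g : β → ℝ} {a : ℝ} (hg : Tendsto g l (𝓝 a))
    (hgf : ∀ᶠ i in l, g i ≤ f (w i)) : a ≤ f z := by
  by_contra! h
  obtain ⟨c, hzc, hca⟩ := exists_between h
  obtain ⟨i, hfi, hgi, hle⟩ :=
    ((hw.eventually (hf c hzc)).and ((hg.eventually (lt_mem_nhds hca)).and hgf)).exists
  linarith

section Minty

open Hadamard

variable {n : ℕ} {M : Type u} [Hadamard n M] {F : M → M → ℝ} {lam : ℝ} {x : M}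

lemma neg_dist_mul_busemann_geo_le (x z y : M) {t : ℝ} (ht : t ∈ Icc (0:ℝ) 1) :
    -(dist (geo n z y t) x * busemann n (geo n z y t) x z) ≤
      t / 2 * (dist x y ^ 2 - dist z x ^ 2 - dist z y ^ 2 + 2 * t * dist z y ^ 2) := by
  have hb := sq_dist_sub_le_dist_mul_busemann (n := n) (geo n z y t) x z
  have hcn := cn_ineq (n := n) z y x t ht
  rw [dist_comm (geo n z y t) z, dist_geo_left z y ht, dist_comm x z] at hb
  rw [dist_comm y x] at hcn
  nlinarith

/-- Compare `G` along the geodesic `w = γ_{z,y}(t)` using `F(w, w) = 0`, the convexity of `F(w, ·)`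
and the CN-inequality, then let `t → 0⁺`. -/
lemma resolventBifunction_nonneg_of_minty (hlam : 0 < lam) {C : Set M} (hC : GConvex n C)
    {z y : M} (hz : z ∈ C) (hy : y ∈ C) (hdiag : ∀ w ∈ C, F w w = 0)
    (hconvF : ∀ w ∈ C, GConvexOn n C (F w))
    (husc : UpperSemicontinuousWithinAt (fun w => F w y) C z)
    (hminty : ∀ w ∈ C, resolventBifunction n F lam x w z ≤ 0) :
    0 ≤ resolventBifunction n F lam x z y := by
  set Q := dist x y ^ 2 - dist z x ^ 2 - dist z y ^ 2
  have hlow : ∀ t ∈ Ioc (0:ℝ) 1,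
      -((1 - t) / 2) * (Q + 2 * t * dist z y ^ 2) ≤ lam * F (geo n z y t) y := by
    intro t ht
    have ht' : t ∈ Icc (0:ℝ) 1 := Ioc_subset_Icc_self ht
    have hw : geo n z y t ∈ C := hC z hz y hy t ht'
    have hwz : lam * F (geo n z y t) z ≤ t / 2 * (Q + 2 * t * dist z y ^ 2) := by
      have := hminty _ hw
      unfold resolventBifunction at this
      linarith [neg_dist_mul_busemann_geo_le (n := n) x z y ht']
    have hconv := hconvF _ hw z hz y hy t ht'
    rw [hdiag _ hw] at hconv
    nlinarith [ht.1, ht.2, mul_le_mul_of_nonneg_left hconv hlam.le]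
  have hgeo : Tendsto (geo n z y) (𝓝[>] 0) (𝓝[C] z) := by
    refine tendsto_nhdsWithin_iff.2 ⟨?_, ?_⟩
    · exact ((continuous_geo z y).tendsto' 0 z (geo_zero z y)).mono_left nhdsWithin_le_nhds
    · filter_upwards [Ioc_mem_nhdsGT one_pos] with t ht
      exact hC z hz y hy t (Ioc_subset_Icc_self ht)
  have hlim : Tendsto (fun t => -((1 - t) / 2) * (Q + 2 * t * dist z y ^ 2) / lam) (𝓝[>] 0)
      (𝓝 (-Q / 2 / lam)) := by
    have := ((by fun_prop : Continuous fun t : ℝ =>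
      -((1 - t) / 2) * (Q + 2 * t * dist z y ^ 2) / lam).tendsto 0).mono_left
      (nhdsWithin_le_nhds (s := Ioi 0))
    convert this using 2
    ring
  have hFzy : -Q / 2 / lam ≤ F z y := husc.le_of_tendsto hgeo hlim <| by
    filter_upwards [Ioc_mem_nhdsGT one_pos] with t ht
    rw [div_le_iff₀ hlam]
    linarith [hlow t ht]
  rw [div_le_iff₀ hlam] at hFzy
  unfold resolventBifunction
  linarith [sq_dist_sub_le_dist_mul_busemann (n := n) z x y]

end Minty

lemma LinearMap.apply_single_nonneg_of_bddAbove {ι : Type*} [DecidableEq ι]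
    (f : (ι → ℝ) →ₗ[ℝ] ℝ) {ε : ℝ} (hf : BddAbove (f '' univ.pi fun _ => Iio ε)) (i : ι) :
    0 ≤ f (Pi.single i 1) := by
  obtain ⟨u, hu⟩ := hf
  by_contra! hi
  set b : ι → ℝ := fun _ => ε - 1
  have hb : b ∈ univ.pi fun _ => Iio ε := fun _ _ => by simp [b]
  set c := (u - f b + 1) / -f (Pi.single i 1)
  have hc : 0 ≤ c := div_nonneg (by linarith [hu (mem_image_of_mem f hb)]) (by linarith)
  have hcb : b - c • Pi.single i 1 ∈ univ.pi fun _ => Iio ε := fun j _ => by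
    rcases eq_or_ne j i with rfl | hj
    · simp only [b, Pi.sub_apply, Pi.smul_apply, Pi.single_eq_same, smul_eq_mul, mem_Iio]
      linarith
    · simp [b, hj]
  have hcf : c * -f (Pi.single i 1) = u - f b + 1 := div_mul_cancel₀ _ (by linarith)
  have := hu (mem_image_of_mem f hcb)
  rw [map_sub, map_smul, smul_eq_mul] at this
  linarith

/-- Separating `A` from the open orthant `{b | ∀ i, b i < ε}` by a hyperplane. -/
lemma exists_weights_le_sum_mul {ι : Type*} [Fintype ι] {A : Set (ι → ℝ)} (hA : Convex ℝ A)
    (hAne : A.Nonempty) {ε : ℝ} (hε : ∀ a ∈ A, ∃ i, ε ≤ a i) :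
    ∃ ν : ι → ℝ, (∀ i, 0 ≤ ν i) ∧ ∑ i, ν i = 1 ∧ ∀ a ∈ A, ε ≤ ∑ i, ν i * a i := by
  classical
  set B : Set (ι → ℝ) := univ.pi fun _ => Iio ε
  have hdisj : Disjoint B A := disjoint_left.2 fun b hb hbA =>
    let ⟨j, hj⟩ := hε b hbA
    (hb j (mem_univ j)).not_ge hj
  obtain ⟨f, u, hfB, hfA⟩ := geometric_hahn_banach_open (convex_pi fun _ _ => convex_Iio ε)
    (isOpen_set_pi finite_univ fun _ _ => isOpen_Iio) hA hdisj
  set μ : ι → ℝ := fun i => f (Pi.single i 1)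
  have hf : ∀ b, f b = ∑ i, μ i * b i := fun b => by
    conv_lhs => rw [pi_eq_sum_univ' b]
    simp [μ, mul_comm]
  have hB : (fun _ => ε - 1) ∈ B := fun _ _ => by simp
  have hμ : ∀ i, 0 ≤ μ i := LinearMap.apply_single_nonneg_of_bddAbove (f : (ι → ℝ) →ₗ[ℝ] ℝ)
    ⟨u, forall_mem_image.2 fun b hb => (hfB b hb).le⟩
  have hεu : f (fun _ => ε) ≤ u := by
    have hcl : (fun _ => ε) ∈ closure B := by
      rw [closure_pi_set]
      exact fun i _ => by simp [closure_Iio]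
    exact closure_minimal (fun b hb => (hfB b hb).le) (isClosed_le f.continuous continuous_const)
      hcl
  obtain ⟨a₀, ha₀⟩ := hAne
  have hS : 0 < ∑ i, μ i := by
    refine (Finset.sum_nonneg fun i _ => hμ i).lt_of_ne fun h => ?_
    have hf0 : ∀ b, f b = 0 := fun b => by
      rw [hf, Finset.sum_eq_zero fun i _ => by
        rw [(Finset.sum_eq_zero_iff_of_nonneg fun i _ => hμ i).1 h.symm i (Finset.mem_univ i),
          zero_mul]]
    linarith [hfB _ hB, hfA _ ha₀, hf0 (fun _ => ε - 1), hf0 a₀]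
  refine ⟨fun i => μ i / ∑ j, μ j, fun i => div_nonneg (hμ i) hS.le, ?_, fun a ha => ?_⟩
  · rw [← Finset.sum_div, div_self hS.ne']
  · have h := hεu.trans (hfA a ha)
    rw [hf, hf, ← Finset.sum_mul] at h
    simp only [div_mul_eq_mul_div, ← Finset.sum_div, le_div_iff₀ hS]
    linarith

lemma sum_sum_mul_mul_nonpos {ι : Type*} (t : Finset ι) {ν : ι → ℝ} (hν : ∀ i ∈ t, 0 ≤ ν i)
    {g : ι → ι → ℝ} (hg : ∀ i ∈ t, ∀ j ∈ t, g i j + g j i ≤ 0) :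
    ∑ i ∈ t, ∑ j ∈ t, ν i * ν j * g i j ≤ 0 := by
  have hsymm : ∑ i ∈ t, ∑ j ∈ t, ν i * ν j * g j i = ∑ i ∈ t, ∑ j ∈ t, ν i * ν j * g i j := by
    rw [Finset.sum_comm]
    simp_rw [mul_comm (ν _) (ν _)]
  have hsum : ∑ i ∈ t, ∑ j ∈ t, ν i * ν j * (g i j + g j i) ≤ 0 :=
    Finset.sum_nonpos fun i hi => Finset.sum_nonpos fun j hj =>
      mul_nonpos_of_nonneg_of_nonpos (mul_nonneg (hν i hi) (hν j hj)) (hg i hi j hj)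
  simp_rw [mul_add, Finset.sum_add_distrib, hsymm] at hsum
  linarith

lemma exists_pos_forall_exists_le {X : Type*} [TopologicalSpace X] {K : Set X}
    (hK : IsCompact K) {ι : Type*} [Finite ι] {g : ι → X → ℝ}
    (hg : ∀ i, LowerSemicontinuousOn (g i) K) (hpos : ∀ z ∈ K, ∃ i, 0 < g i z) :
    ∃ δ > 0, ∀ z ∈ K, ∃ i, δ ≤ g i z := by
  rcases K.eq_empty_or_nonempty with rfl | hKne
  · exact ⟨1, one_pos, by simp⟩
  obtain ⟨i₀, -⟩ := hpos _ hKne.some_mem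
  have : Nonempty ι := ⟨i₀⟩
  have hbdd : ∀ z, BddAbove (range fun i => g i z) := fun z => (finite_range _).bddAbove
  obtain ⟨z₀, hz₀, hmin⟩ :=
    (lowerSemicontinuousOn_ciSup (fun z _ => hbdd z) hg).exists_isMinOn hKne hK
  obtain ⟨i₀, hi₀⟩ := hpos z₀ hz₀
  refine ⟨_, hi₀.trans_le (le_ciSup (hbdd z₀) i₀), fun z hz => ?_⟩
  obtain ⟨i, hi⟩ := exists_eq_ciSup_of_finite (f := fun i => g i z)
  exact ⟨i, hi ▸ isMinOn_iff.1 hmin z hz⟩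

section KyFan

open Hadamard

variable {n : ℕ} {M : Type u} [Hadamard n M]

lemma exists_gconvex_barycenter {K : Set M} (hK : GConvex n K) {ι : Type*} (t : Finset ι)
    (p : ι → M) (hp : ∀ i ∈ t, p i ∈ K) (ν : ι → ℝ) (hν : ∀ i ∈ t, 0 ≤ ν i)
    (hsum : ∑ i ∈ t, ν i = 1) :
    ∃ c ∈ K, ∀ g : M → ℝ, GConvexOn n K g → g c ≤ ∑ i ∈ t, ν i * g (p i) := by
  classical
  induction t using Finset.induction_on generalizing ν with
  | empty => simp at hsum
  | @insert j s hj ih =>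
    simp only [Finset.mem_insert, forall_eq_or_imp] at hp hν
    rw [Finset.sum_insert hj] at hsum
    simp_rw [Finset.sum_insert hj]
    set σ := ∑ i ∈ s, ν i
    rcases (Finset.sum_nonneg hν.2 : 0 ≤ σ).eq_or_lt with hσ | hσ
    · have hs : ∀ i ∈ s, ν i = 0 := (Finset.sum_eq_zero_iff_of_nonneg hν.2).1 hσ.symm
      refine ⟨p j, hp.1, fun g _ => ?_⟩
      rw [Finset.sum_eq_zero fun i hi => by rw [hs i hi, zero_mul], show ν j = 1 by linarith]
      simp
    · obtain ⟨c, hc, hcg⟩ := ih hp.2 (fun i => ν i / σ) (fun i hi => div_nonneg (hν.2 i hi) hσ.le)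
        (by rw [← Finset.sum_div, div_self hσ.ne'])
      have hνj : ν j ∈ Icc (0:ℝ) 1 := ⟨hν.1, by linarith⟩
      refine ⟨geo n c (p j) (ν j), hK c hc (p j) hp.1 _ hνj, fun g hg => ?_⟩
      have h1 := hg c hc (p j) hp.1 _ hνj
      have h2 := mul_le_mul_of_nonneg_left (hcg g hg) hσ.le
      have h3 : σ * ∑ i ∈ s, ν i / σ * g (p i) = ∑ i ∈ s, ν i * g (p i) := by
        rw [Finset.mul_sum]
        have hσ0 : σ ≠ 0 := hσ.ne'
        exact Finset.sum_congr rfl fun i _ => by field_simp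
      rw [show 1 - ν j = σ by linarith] at h1
      linarith

/-- At a geodesic barycenter `c` of the `w i` with the separating weights `ν`, convexity and
monotonicity force `∑ ν i * G (w i) c ≤ 0`. -/
lemma exists_forall_lt_of_monotone {G : M → M → ℝ} {K : Set M} (hK : GConvex n K)
    (hKne : K.Nonempty) {ι : Type*} [Fintype ι] (w : ι → M) (hw : ∀ i, w i ∈ K)
    (hmono : ∀ i j, G (w i) (w j) + G (w j) (w i) ≤ 0) (hconv : ∀ i, GConvexOn n K (G (w i)))
    {ε : ℝ} (hε : 0 < ε) : ∃ z ∈ K, ∀ i, G (w i) z < ε := by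
  by_contra! h
  set A : Set (ι → ℝ) := {a | ∃ z ∈ K, ∀ i, G (w i) z ≤ a i}
  have hA : Convex ℝ A := by
    rintro a ⟨z₁, hz₁, ha⟩ b ⟨z₂, hz₂, hb⟩ α β hα hβ hαβ
    have hβ1 : β ∈ Icc (0:ℝ) 1 := ⟨hβ, by linarith⟩
    refine ⟨geo n z₁ z₂ β, hK z₁ hz₁ z₂ hz₂ β hβ1, fun i => ?_⟩
    have := hconv i z₁ hz₁ z₂ hz₂ β hβ1
    rw [show 1 - β = α by linarith] at this
    simp only [Pi.add_apply, Pi.smul_apply, smul_eq_mul]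
    nlinarith [mul_le_mul_of_nonneg_left (ha i) hα, mul_le_mul_of_nonneg_left (hb i) hβ]
  obtain ⟨z₀, hz₀⟩ := hKne
  obtain ⟨ν, hν0, hν1, hνA⟩ := exists_weights_le_sum_mul hA ⟨_, z₀, hz₀, fun _ => le_rfl⟩
    fun a ⟨z, hz, ha⟩ => (h z hz).imp fun i hi => hi.trans (ha i)
  obtain ⟨c, hc, hcg⟩ := exists_gconvex_barycenter hK Finset.univ w (fun i _ => hw i) ν
    (fun i _ => hν0 i) hν1
  have hGc : ∑ i, ν i * G (w i) c ≤ 0 := calc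
    _ ≤ ∑ i, ν i * ∑ j, ν j * G (w i) (w j) :=
      Finset.sum_le_sum fun i _ => mul_le_mul_of_nonneg_left (hcg _ (hconv i)) (hν0 i)
    _ = ∑ i, ∑ j, ν i * ν j * G (w i) (w j) := by simp_rw [Finset.mul_sum, mul_assoc]
    _ ≤ 0 := sum_sum_mul_mul_nonpos _ (fun i _ => hν0 i) fun i _ j _ => hmono i j
  linarith [hνA _ ⟨c, hc, fun _ => le_rfl⟩]

/-- Compactness reduces to finitely many `w`, and lower semicontinuity turns `0 < maxᵢ G(wᵢ, ·)`
into a uniform gap `δ`. -/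
lemma exists_minty_point {G : M → M → ℝ} {K : Set M} (hKc : IsCompact K) (hK : GConvex n K)
    (hKne : K.Nonempty) (hmono : ∀ a ∈ K, ∀ b ∈ K, G a b + G b a ≤ 0)
    (hconv : ∀ w ∈ K, GConvexOn n K (G w)) (hlsc : ∀ w ∈ K, LowerSemicontinuousOn (G w) K) :
    ∃ z ∈ K, ∀ w ∈ K, G w z ≤ 0 := by
  by_contra! h
  obtain ⟨u, hu⟩ :=
    (LowerSemicontinuousOn.inter_biInter_preimage_Iic_eq_empty_iff_exists_finset hKc hlsc).1 <|
      eq_empty_of_forall_notMem fun z ⟨hz, hzG⟩ =>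
        let ⟨w, hw, hwz⟩ := h z hz
        (mem_iInter₂.1 hzG w hw).not_gt hwz
  obtain ⟨δ, hδ, hgap⟩ := exists_pos_forall_exists_le hKc (g := fun i : u => G i.1.1)
    (fun i => hlsc _ i.1.2) fun z hz =>
      let ⟨i, hi, h⟩ := hu z hz
      ⟨⟨i, hi⟩, h⟩
  obtain ⟨z, hz, hzδ⟩ := exists_forall_lt_of_monotone hK hKne (fun i : u => i.1.1)
    (fun i => i.1.2) (fun i j => hmono _ i.1.2 _ j.1.2) (fun i => hconv _ i.1.2) hδ
  obtain ⟨i, hi⟩ := hgap z hz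
  exact (hzδ i).not_ge hi

end KyFan

lemma exists_forall_le_of_not_tendsto_dist {X : Type*} [MetricSpace X] [ProperSpace X]
    {Ω : Set X} (hΩ : IsClosed Ω) {G : X → X → ℝ} (hG : ∀ w ∈ Ω, LowerSemicontinuousOn (G w) Ω)
    {x : X} {r : ℕ → ℝ} (hr : Tendsto r atTop atTop) {z : ℕ → X} (hzΩ : ∀ k, z k ∈ Ω)
    (hz : ∀ k, ∀ w ∈ Ω, dist w x ≤ r k → G w (z k) ≤ 0)
    (hbdd : ¬Tendsto (fun k => dist (z k) x) atTop atTop) :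
    ∃ zb ∈ Ω, ∀ w ∈ Ω, G w zb ≤ 0 := by
  obtain ⟨b, hb⟩ : ∃ b, ∃ᶠ k in atTop, z k ∈ closedBall x b := by
    simp only [Filter.tendsto_atTop, not_forall, not_eventually, not_le] at hbdd
    obtain ⟨b, hb⟩ := hbdd
    exact ⟨b, hb.mono fun k hk => mem_closedBall.2 hk.le⟩
  obtain ⟨zb, -, hzb⟩ := (isCompact_closedBall x b).exists_mapClusterPt_of_frequently hb
  refine ⟨zb, hΩ.mem_of_mapClusterPt hzb (Eventually.of_forall hzΩ), fun w hw => ?_⟩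
  obtain ⟨v, hv, hΩv⟩ := lowerSemicontinuousOn_iff_preimage_Iic.1 (hG w hw) 0
  have : zb ∈ Ω ∩ v := (hΩ.inter hv).mem_of_mapClusterPt hzb <| by
    filter_upwards [hr.eventually_ge_atTop (dist w x)] with k hk
    rw [← hΩv]
    exact ⟨hzΩ k, hz k w hw hk⟩
  rw [← hΩv] at this
  exact this.2

lemma exists_minty_point_inter_closedBall {n : ℕ} {M : Type u} [Hadamard n M] {Ω : Set M}
    (hcl : IsClosed Ω) (hconv : GConvex n Ω) {F : M → M → ℝ}
    (hmono : ∀ a ∈ Ω, ∀ b ∈ Ω, F a b + F b a ≤ 0) (hconvf : ∀ w ∈ Ω, GConvexOn n Ω (F w))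
    (hlsc : ∀ w ∈ Ω, LowerSemicontinuousOn (F w) Ω) {lam : ℝ} (hlam : 0 ≤ lam) (x : M) {r : ℝ}
    (hne : (Ω ∩ closedBall x r).Nonempty) :
    ∃ z ∈ Ω ∩ closedBall x r, ∀ w ∈ Ω ∩ closedBall x r, resolventBifunction n F lam x w z ≤ 0 := by
  have := Hadamard.properSpace (n := n) (M := M)
  exact exists_minty_point ((isCompact_closedBall x r).inter_left hcl)
    (hconv.inter (gconvex_closedBall x r)) hne
    (fun a ha b hb => resolventBifunction_add_swap_nonpos hlam (hmono a ha.1 b hb.1))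
    (fun w hw => ((hconvf w hw.1).resolventBifunction hlam).mono inter_subset_left)
    (fun w hw => ((hlsc w hw.1).resolventBifunction hlam).mono inter_subset_left)

/-- Let `M` be an `n`-dimensional Hadamard manifold, `Ω ⊆ M` nonempty
closed convex, `F : Ω × Ω → ℝ` a monotone bifunction with `F(x,x) = 0` and `λ > 0`.
Assume: for every `x ∈ Ω`, `y ↦ F(x,y)` is convex and lower semicontinuous; for every
`y ∈ Ω`, `x ↦ F(x,y)` is upper semicontinuous; and the coercivity condition (iv).  Then
for every `x ∈ M` the resolvent
`J_λ^F(x) = {z ∈ Ω : λ F(z,y) + d(z,x) b_{γ_{z,x}}(y) ≥ 0 for all y ∈ Ω}`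
is nonempty (the regularization term being `0` when `z = x`, as then `d(z,x) = 0`). -/
theorem resolvent_nonempty {n : ℕ} {M : Type u} [Hadamard n M]
    {Ω : Set M} (hne : Ω.Nonempty) (hcl : IsClosed Ω) (hconv : GConvex n Ω)
    (F : M → M → ℝ) (hdiag : ∀ x ∈ Ω, F x x = 0)
    (hmono : ∀ x ∈ Ω, ∀ y ∈ Ω, F x y + F y x ≤ 0)
    (hconvf : ∀ x ∈ Ω, GConvexOn n Ω (fun y => F x y))
    (hlsc : ∀ x ∈ Ω, LowerSemicontinuousOn (fun y => F x y) Ω)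
    (husc : ∀ y ∈ Ω, UpperSemicontinuousOn (fun x => F x y) Ω)
    (hcoer : ∀ z₀ : M, ∀ z : ℕ → M, (∀ k, z k ∈ Ω) →
      Tendsto (fun k => dist (z k) z₀) atTop atTop →
      ∃ xs ∈ Ω, ∃ k₀ : ℕ, ∀ k ≥ k₀, F (z k) xs ≤ 0)
    {lam : ℝ} (hlam : 0 < lam) (x : M) :
    {z | z ∈ Ω ∧ ∀ y ∈ Ω,
      0 ≤ lam * F z y + dist z x * busemann n z x y}.Nonempty := by
  have := Hadamard.properSpace (n := n) (M := M)
  obtain ⟨w₀, hw₀⟩ := hne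
  set r : ℕ → ℝ := fun k => dist w₀ x + k
  have hr : Tendsto r atTop atTop := tendsto_atTop_add_const_left _ _ tendsto_natCast_atTop_atTop
  choose z hzK hz using fun k => exists_minty_point_inter_closedBall hcl hconv hmono hconvf hlsc
    hlam.le x (r := r k) ⟨w₀, hw₀, mem_closedBall.2 (by simp [r])⟩
  have hbdd : ¬Tendsto (fun k => dist (z k) x) atTop atTop := by
    intro htop
    obtain ⟨xs, hxs, k₀, hk₀⟩ := hcoer x z (fun k => (hzK k).1) htop
    obtain ⟨k, hk, hxsK, hfar⟩ := ((eventually_ge_atTop k₀).and <|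
      (hr.eventually_ge_atTop (dist xs x)).and (htop.eventually_gt_atTop (dist xs x))).exists
    refine (resolventBifunction_neg hlam.le (hk₀ k hk) hfar).not_ge ?_
    exact resolventBifunction_nonneg_of_minty hlam (hconv.inter (gconvex_closedBall x _)) (hzK k)
      ⟨hxs, mem_closedBall.2 hxsK⟩ (fun w hw => hdiag w hw.1)
      (fun w hw => (hconvf w hw.1).mono inter_subset_left)
      ((husc xs hxs _ (hzK k).1).mono inter_subset_left) (hz k)
  obtain ⟨zb, hzb, hzbG⟩ := exists_forall_le_of_not_tendsto_dist hcl
    (fun w hw => (hlsc w hw).resolventBifunction hlam.le) hr (fun k => (hzK k).1)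
    (fun k w hw hwr => hz k w ⟨hw, mem_closedBall.2 hwr⟩) hbdd
  exact ⟨zb, hzb, fun y hy => resolventBifunction_nonneg_of_minty hlam hconv hzb hy hdiag hconvf
    (husc y hy zb hzb) hzbG⟩
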